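/- Over 𝔽₂, the map φ sending a polynomial f in 𝔽₂[x₁,…,x_n] of degree at most one in each variable to Σ_{a ∈ Z(f)} x^a (where Z(f) is the zero set of f in 𝔽₂ⁿ and x^a = x₁^{a₁}⋯x_n^{a_n}) satisfies φ⁴(f) = f for all such f; in particular φ is a bijection on the set of such polynomials. -/
import Mathlib


open MvPolynomial

/-- The map `φ` over `𝔽₂` sending a polynomial `f` (of degree at most one in
each variable) to `Σ_{a ∈ Z(f)} x^a`. -/
noncomputable def phiF2 (n : ℕ) (f : MvPolynomial (Fin n) (ZMod 2)) :
    MvPolynomial (Fin n) (ZMod 2) :=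
  ∑ a ∈ Finset.univ.filter (fun a : Fin n → ZMod 2 => eval a f = 0),
    monomial (Finsupp.equivFunOnFinite.symm fun i => (a i).val) 1

namespace PhiF2Aux

variable {n : ℕ}

/-- The exponent vector associated to a point of `𝔽₂ⁿ`. -/
noncomputable def ind (a : Fin n → ZMod 2) : Fin n →₀ ℕ :=
  Finsupp.equivFunOnFinite.symm fun i => (a i).val

@[simp] lemma ind_apply (a : Fin n → ZMod 2) (i : Fin n) : ind a i = (a i).val := rfl

lemma ind_injective : Function.Injective (ind (n := n)) := by
  intro a b h
  funext i
  have := congrArg (fun m => (m : Fin n →₀ ℕ) i) h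
  simp only [ind_apply] at this
  exact ZMod.val_injective 2 this

/-- Packaging a coefficient function into a multilinear polynomial. -/
noncomputable def P (g : (Fin n → ZMod 2) → ZMod 2) : MvPolynomial (Fin n) (ZMod 2) :=
  ∑ a, monomial (ind a) (g a)

/-- `χ(a,b) = ∏ i, b i ^ (a i)`, the evaluation of the monomial `x^a` at `b`. -/
def chi (a b : Fin n → ZMod 2) : ZMod 2 := ∏ i, b i ^ (a i).val

/-- The "zeta/Möbius" transform. -/
def M (g : (Fin n → ZMod 2) → ZMod 2) (b : Fin n → ZMod 2) : ZMod 2 :=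
  ∑ a, chi a b * g a

lemma eval_monomial_ind (a b : Fin n → ZMod 2) (c : ZMod 2) :
    eval b (monomial (ind a) c) = c * chi a b := by
  rw [MvPolynomial.eval_monomial]
  congr 1
  rw [Finsupp.prod_fintype _ _ (fun i => pow_zero _)]
  rfl

lemma eval_P (g : (Fin n → ZMod 2) → ZMod 2) (b : Fin n → ZMod 2) :
    eval b (P g) = M g b := by
  rw [P, map_sum, M]
  refine Finset.sum_congr rfl fun a _ => ?_
  rw [eval_monomial_ind, mul_comm]

lemma phiF2_eq_P (f : MvPolynomial (Fin n) (ZMod 2)) :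
    phiF2 n f = P (fun a => 1 + eval a f) := by
  rw [phiF2, P, Finset.sum_filter]
  refine Finset.sum_congr rfl fun a _ => ?_
  have h2 : (1 : ZMod 2) + eval a f = if eval a f = 0 then 1 else 0 := by
    generalize eval a f = x; revert x; decide
  rw [h2, apply_ite (monomial (ind a))]
  simp [ind]

lemma coeff_P (g : (Fin n → ZMod 2) → ZMod 2) (a : Fin n → ZMod 2) :
    coeff (ind a) (P g) = g a := by
  rw [P, MvPolynomial.coeff_sum]
  rw [Finset.sum_eq_single a]
  · simp [coeff_monomial]
  · intro b _ hb
    rw [coeff_monomial, if_neg (fun h => hb (ind_injective h))]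
  · simp

lemma coeff_P_of_ne (g : (Fin n → ZMod 2) → ZMod 2) (m : Fin n →₀ ℕ)
    (hm : ∀ a : Fin n → ZMod 2, ind a ≠ m) : coeff m (P g) = 0 := by
  rw [P, MvPolynomial.coeff_sum]
  exact Finset.sum_eq_zero fun a _ => by rw [coeff_monomial, if_neg (hm a)]

lemma P_multilinear (g : (Fin n → ZMod 2) → ZMod 2) :
    ∀ m ∈ (P g).support, ∀ i, m i ≤ 1 := by
  intro m hm i
  by_contra h
  push_neg at h
  refine (MvPolynomial.mem_support_iff.mp hm) (coeff_P_of_ne g m fun a ha => ?_)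
  have : (a i).val = m i := by rw [← ha]; rfl
  have hv := ZMod.val_lt (a i)
  omega

/-- Every multilinear polynomial is `P` of its coefficient function. -/
lemma eq_P_coeff (f : MvPolynomial (Fin n) (ZMod 2))
    (hf : ∀ m ∈ f.support, ∀ i, m i ≤ 1) :
    f = P (fun a => coeff (ind a) f) := by
  ext m
  by_cases hm : ∀ i, m i ≤ 1
  · set a : Fin n → ZMod 2 := fun i => (m i : ZMod 2) with ha
    have hia : ind a = m := by
      ext i
      rw [ind_apply, ha, ZMod.val_natCast_of_lt (by have := hm i; omega)]
    rw [← hia, coeff_P]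
  · push_neg at hm
    obtain ⟨i, hi⟩ := hm
    have h1 : coeff m f = 0 := by
      by_contra h
      have := hf m (MvPolynomial.mem_support_iff.mpr h) i
      omega
    rw [h1, coeff_P_of_ne]
    intro a ha
    have : (a i).val = m i := by rw [← ha]; rfl
    have hv := ZMod.val_lt (a i)
    omega

lemma chi_mul_sum (s b : Fin n → ZMod 2) :
    ∑ a : Fin n → ZMod 2, chi a b * chi s a = if s = b then 1 else 0 := by
  have key : ∀ u v : ZMod 2, (∑ x : ZMod 2, v ^ x.val * x ^ u.val)
      = if u = v then 1 else 0 := by decide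
  calc ∑ a : Fin n → ZMod 2, chi a b * chi s a
      = ∑ a : Fin n → ZMod 2, ∏ i, (b i ^ (a i).val * (a i) ^ (s i).val) := by
        refine Finset.sum_congr rfl fun a _ => ?_
        rw [chi, chi, ← Finset.prod_mul_distrib]
    _ = ∏ i, ∑ x : ZMod 2, (b i ^ x.val * x ^ (s i).val) := by
        rw [Finset.prod_univ_sum, Fintype.piFinset_univ]
    _ = ∏ i, (if s i = b i then 1 else 0) := by
        exact Finset.prod_congr rfl fun i _ => key (s i) (b i)
    _ = if s = b then 1 else 0 := by
        by_cases h : s = b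
        · simp [h]
        · rw [if_neg h]
          obtain ⟨i, hi⟩ := Function.ne_iff.mp h
          exact Finset.prod_eq_zero (Finset.mem_univ i) (if_neg hi)

lemma M_M (g : (Fin n → ZMod 2) → ZMod 2) (b : Fin n → ZMod 2) :
    M (M g) b = g b := by
  unfold M
  calc ∑ a, chi a b * ∑ s, chi s a * g s
      = ∑ a, ∑ s, chi a b * (chi s a * g s) := by
        exact Finset.sum_congr rfl fun a _ => Finset.mul_sum _ _ _
    _ = ∑ s, ∑ a, chi a b * (chi s a * g s) := Finset.sum_comm
    _ = ∑ s, (∑ a, chi a b * chi s a) * g s := by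
        refine Finset.sum_congr rfl fun s _ => ?_
        rw [Finset.sum_mul]
        exact Finset.sum_congr rfl fun a _ => (mul_assoc _ _ _).symm
    _ = g b := by
        rw [Finset.sum_eq_single b]
        · rw [chi_mul_sum, if_pos rfl, one_mul]
        · intro s _ hs; rw [chi_mul_sum, if_neg hs, zero_mul]
        · simp

lemma M_one (b : Fin n → ZMod 2) :
    (∑ a : Fin n → ZMod 2, chi a b) = if b = 0 then 1 else 0 := by
  have key : ∀ v : ZMod 2, (∑ x : ZMod 2, v ^ x.val) = if v = 0 then 1 else 0 := by decide
  calc ∑ a : Fin n → ZMod 2, chi a b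
      = ∑ a : Fin n → ZMod 2, ∏ i, b i ^ (a i).val := rfl
    _ = ∏ i, ∑ x : ZMod 2, b i ^ x.val := by
        rw [Finset.prod_univ_sum, Fintype.piFinset_univ]
    _ = ∏ i, (if b i = 0 then 1 else 0) := Finset.prod_congr rfl fun i _ => key (b i)
    _ = if b = 0 then 1 else 0 := by
        by_cases h : b = 0
        · simp [h]
        · rw [if_neg h]
          obtain ⟨i, hi⟩ := Function.ne_iff.mp h
          exact Finset.prod_eq_zero (Finset.mem_univ i) (if_neg hi)

lemma P_add (g h : (Fin n → ZMod 2) → ZMod 2) :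
    P (fun a => g a + h a) = P g + P h := by
  rw [P, P, P, ← Finset.sum_add_distrib]
  exact Finset.sum_congr rfl fun a _ => by rw [map_add]

/-- The key identity: `φ²(f) = f + P(1 + δ₀)` for multilinear `f`. -/
lemma phi_phi (f : MvPolynomial (Fin n) (ZMod 2))
    (hf : ∀ m ∈ f.support, ∀ i, m i ≤ 1) :
    phiF2 n (phiF2 n f) =
      P (fun b => 1 + if b = 0 then 1 else 0) + f := by
  have hc : f = P (fun a => coeff (ind a) f) := eq_P_coeff f hf
  have hEf : ∀ a, eval a f = ∑ s, chi s a * coeff (ind s) f := by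
    intro a; conv_lhs => rw [hc]
    exact eval_P _ a
  rw [phiF2_eq_P (phiF2 n f)]
  have h1 : ∀ b, eval b (phiF2 n f) = M (fun a => 1 + eval a f) b := by
    intro b; rw [phiF2_eq_P, eval_P]
  have h2 : ∀ b, (1 : ZMod 2) + eval b (phiF2 n f)
      = (1 + if b = 0 then 1 else 0) + coeff (ind b) f := by
    intro b
    rw [h1]
    unfold M
    have : ∑ a, chi a b * (1 + eval a f)
        = (∑ a, chi a b) + ∑ a, chi a b * eval a f := by
      rw [← Finset.sum_add_distrib]
      exact Finset.sum_congr rfl fun a _ => by ring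
    rw [this, M_one]
    have h3 : ∑ a, chi a b * eval a f = coeff (ind b) f := by
      have hm := M_M (fun s => coeff (ind s) f) b
      unfold M at hm
      rw [← hm]
      exact Finset.sum_congr rfl fun a _ => by rw [hEf a]
    rw [h3]; ring
  have : P (fun b => 1 + eval b (phiF2 n f))
      = P (fun b => (1 + if b = 0 then 1 else 0) + coeff (ind b) f) := by
    congr 1; funext b; exact h2 b
  rw [this, P_add]
  congr 1
  exact hc.symm

end PhiF2Aux

/-- Over `𝔽₂`, `φ⁴ = id` on polynomials of degree at most one in each variable;
in particular `φ` is a bijection on this set. -/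
theorem phiF2_fourth_iterate (n : ℕ) (f : MvPolynomial (Fin n) (ZMod 2))
    (hf : ∀ m ∈ f.support, ∀ i, m i ≤ 1) :
    phiF2 n (phiF2 n (phiF2 n (phiF2 n f))) = f := by
  open PhiF2Aux in
  have h1 := phi_phi f hf
  have hml : ∀ m ∈ (phiF2 n (phiF2 n f)).support, ∀ i, m i ≤ 1 := by
    rw [phiF2_eq_P (phiF2 n f)]
    exact P_multilinear _
  have h2 := phi_phi (phiF2 n (phiF2 n f)) hml
  rw [h2, h1, ← add_assoc, CharTwo.add_self_eq_zero, zero_add]
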